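/- arXiv:2009.00720 — 7 statements merged into one kernel-verified Lean document; each statement's English description precedes it below -/
import Mathlib

section
/- If λ = 0, then f is identically zero: f(t) = 0 for all t ∈ ℝ. (This is part (1) of Lemma 3.2 of the paper.) -/
theorem eq_zero_of_hasDerivAt_mul_self {a g : ℝ → ℝ} (ha : Continuous a)
    (hg : ∀ t, HasDerivAt g (a t * g t) t) {t₀ : ℝ} (h₀ : g t₀ = 0) (t : ℝ) : g t = 0 := by
  set A : ℝ → ℝ := fun u => ∫ x in t₀..u, a x
  have hA : ∀ u, HasDerivAt A (a u) u := fun u => (ha.integral_hasStrictDerivAt t₀ u).hasDerivAt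
  -- integrating factor: `g · exp (-A)` has zero derivative
  have hconst : ∀ u, HasDerivAt (fun u => g u * Real.exp (-A u)) 0 u := fun u => by
    refine ((hg u).mul (hA u).neg.exp).congr_deriv ?_
    ring
  have key := is_const_of_deriv_eq_zero (fun u => (hconst u).differentiableAt)
    (fun u => (hconst u).deriv) t t₀
  simpa [h₀, Real.exp_ne_zero] using key

/-- If `f (t₀) = c ≠ 0`, the solution would be `1 / (c⁻¹ - (t - t₀) / m)`, which blows up at
`t₀ + m / c`. The defect `f · (c⁻¹ - (t - t₀) / m) - 1` satisfies a linear equation and vanishes at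
`t₀`, hence everywhere, which is absurd at `t₀ + m / c`. -/
theorem eq_zero_of_hasDerivAt_sq_div {m : ℝ} (hm : m ≠ 0) {f : ℝ → ℝ}
    (hf : ∀ t, HasDerivAt f (f t ^ 2 / m) t) (t₀ : ℝ) : f t₀ = 0 := by
  by_contra hc
  set c := f t₀
  set g : ℝ → ℝ := fun t => f t * (c⁻¹ - (t - t₀) / m) - 1
  have hg : ∀ t, HasDerivAt g (f t / m * g t) t := fun t => by
    have hlin : HasDerivAt (fun t => c⁻¹ - (t - t₀) / m) (-(1 / m)) t := by
      simpa using (((hasDerivAt_id t).sub_const t₀).div_const m).const_sub c⁻¹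
    refine (((hf t).mul hlin).sub_const 1).congr_deriv ?_
    simp only [g]
    field_simp
    ring
  have hcont : Continuous fun t => f t / m :=
    (continuous_iff_continuousAt.mpr fun t => (hf t).continuousAt).div_const m
  have hg₀ : g t₀ = 0 := by simp [g, c, mul_inv_cancel₀ hc]
  have hblow : g (t₀ + m / c) = -1 := by simp [g, field]
  linarith [eq_zero_of_hasDerivAt_mul_self hcont hg hg₀ (t₀ + m / c)]

/-- Lemma 3.2(1): if `λ = 0`, a global solution of the Riccati equation
`f'(t) = (1/m) f(t)² + λ` is identically zero. -/
theorem riccati_lambda_zero (m lam : ℝ) (hm : m ≠ 0) (f : ℝ → ℝ)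
    (hf : ∀ t : ℝ, HasDerivAt f ((1 / m) * (f t) ^ 2 + lam) t)
    (hlam : lam = 0) :
    ∀ t : ℝ, f t = 0 := by
  subst hlam
  refine eq_zero_of_hasDerivAt_sq_div hm fun t => ?_
  simpa [div_eq_inv_mul] using hf t
end

section
/- If λ·m > 0, then no such f exists: there is no differentiable function f : ℝ → ℝ defined on all of ℝ with f'(t) = (1/m)·f(t)² + λ for all t ∈ ℝ. (This is part (2) of Lemma 3.2 of the paper.) -/
/-!
With `a = √(λm)` the right-hand side factors as `(f² + a²)/m`, so `arctan (f / a)` has constant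
derivative `a / m ≠ 0` and hence grows linearly. It would therefore change by `π` on some
interval, which is impossible for a function with values in `(-π/2, π/2)`.
-/

open Real

theorem eq_add_mul_of_forall_hasDerivAt_const {g : ℝ → ℝ} {c : ℝ}
    (hg : ∀ t, HasDerivAt g c t) (t : ℝ) : g t = g 0 + c * t := by
  have hderiv : ∀ s, HasDerivAt (fun s => g s - c * s) 0 s := fun s => by
    have hlin : HasDerivAt (fun s => c * s) c s := by simpa using (hasDerivAt_id s).const_mul c
    exact sub_self c ▸ (hg s).sub hlin
  have hconst := is_const_of_deriv_eq_zero (fun s => (hderiv s).differentiableAt)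
    (fun s => (hderiv s).deriv) t 0
  simp only [mul_zero, sub_zero] at hconst
  linarith

theorem hasDerivAt_arctan_div_of_riccati {f : ℝ → ℝ} {m lam a t : ℝ} (hm : m ≠ 0)
    (ha : a ≠ 0) (ha2 : a ^ 2 = lam * m) (hf : HasDerivAt f ((1 / m) * (f t) ^ 2 + lam) t) :
    HasDerivAt (fun t => arctan (f t / a)) (a / m) t := by
  convert (hf.div_const a).arctan using 1
  field_simp
  linear_combination ha2

theorem riccati_no_global_solution_general (m lam : ℝ) (h : lam * m > 0) :
    ¬ ∃ f : ℝ → ℝ, ∀ t : ℝ, HasDerivAt f ((1 / m) * (f t) ^ 2 + lam) t := by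
  rintro ⟨f, hf⟩
  have hm : m ≠ 0 := by rintro rfl; simp at h
  set a := √(lam * m)
  have ha : 0 < a := sqrt_pos.mpr h
  have hc : a / m ≠ 0 := div_ne_zero ha.ne' hm
  have hlin := eq_add_mul_of_forall_hasDerivAt_const
    (fun t => hasDerivAt_arctan_div_of_riccati hm ha.ne' (sq_sqrt h.le) (hf t)) (π / (a / m))
  rw [mul_div_cancel₀ π hc] at hlin
  linarith [arctan_lt_pi_div_two (f (π / (a / m)) / a), neg_pi_div_two_lt_arctan (f 0 / a)]

/-- Lemma 3.2(2): if `λ·m > 0`, there is no globally defined solution of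
`f'(t) = (1/m) f(t)² + λ`. -/
theorem riccati_no_global_solution (m lam : ℝ) (hm : m ≠ 0) (h : lam * m > 0) :
    ¬ ∃ f : ℝ → ℝ, ∀ t : ℝ, HasDerivAt f ((1 / m) * (f t) ^ 2 + lam) t :=
  riccati_no_global_solution_general m lam h
end

section
/- If λ·m < 0, then exactly one of the following holds: f is the constant function √(−λm), f is the constant function −√(−λm), or there exists a constant C ∈ ℝ such that f(t) = −√(−λm)·tanh((√(−λm)/m)·(t + C)) for all t ∈ ℝ. (This is part (3) of Lemma 3.2 of the paper, with the sign of the tanh solution as in the proof of Lemma 2.3.) -/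
/-!
With `a = √(-λm)` the equation reads `m f' = f² - a² = (f - a)(f + a)`. Each of `a + f` and
`a - f` then solves a linear equation `g' = c g`, so it either vanishes identically (the two
constant solutions) or never vanishes. In the latter case `w = (a + f) / (a - f)` satisfies
`w' = -(2a/m) w`, hence `w = w₀ e^{-2at/m}`. Since `w` never takes the value `-1`, `w₀ > 0`, so
`w = e^{-2a(t+C)/m}` for some `C`, and solving for `f` gives `f = -a tanh(a(t+C)/m)`.
-/

open Real

theorem eq_mul_exp_integral_of_hasDerivAt_mul {c g : ℝ → ℝ} (hc : Continuous c)
    (hg : ∀ t, HasDerivAt g (c t * g t) t) (t : ℝ) :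
    g t = g 0 * exp (∫ s in (0 : ℝ)..t, c s) := by
  set G : ℝ → ℝ := fun u => ∫ s in (0 : ℝ)..u, c s
  have hG : ∀ u, HasDerivAt G (c u) u := fun u => (hc.integral_hasStrictDerivAt 0 u).hasDerivAt
  have hderiv : ∀ u, HasDerivAt (fun v => g v * exp (-G v)) 0 u := fun u =>
    ((hg u).mul (hG u).neg.exp).congr_deriv (by ring)
  have hconst : g t * exp (-G t) = g 0 * exp (-G 0) :=
    is_const_of_deriv_eq_zero (fun v => (hderiv v).differentiableAt) (fun v => (hderiv v).deriv) t 0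
  have hG0 : G 0 = 0 := intervalIntegral.integral_same
  calc g t = g t * exp (-G t) * exp (G t) := by rw [mul_assoc, ← exp_add]; simp
    _ = g 0 * exp (G t) := by rw [hconst, hG0, neg_zero, exp_zero, mul_one]

theorem eq_zero_or_ne_zero_of_hasDerivAt_mul {c g : ℝ → ℝ} (hc : Continuous c)
    (hg : ∀ t, HasDerivAt g (c t * g t) t) : (∀ t, g t = 0) ∨ ∀ t, g t ≠ 0 := by
  by_cases h0 : g 0 = 0
  · exact Or.inl fun t => by rw [eq_mul_exp_integral_of_hasDerivAt_mul hc hg t, h0, zero_mul]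
  · exact Or.inr fun t => by
      rw [eq_mul_exp_integral_of_hasDerivAt_mul hc hg t]
      exact mul_ne_zero h0 (exp_pos _).ne'

theorem eq_mul_exp_of_hasDerivAt_const_mul {k : ℝ} {g : ℝ → ℝ}
    (hg : ∀ t, HasDerivAt g (k * g t) t) (t : ℝ) : g t = g 0 * exp (k * t) := by
  simpa [mul_comm] using eq_mul_exp_integral_of_hasDerivAt_mul continuous_const hg t

theorem Real.tanh_eq_one_sub_exp_div (x : ℝ) :
    tanh x = (1 - exp (-2 * x)) / (1 + exp (-2 * x)) := by
  have h : exp (-2 * x) = exp (-x) * exp (-x) := by rw [← exp_add]; congr 1; ring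
  rw [tanh_eq_sinh_div_cosh, sinh_eq, cosh_eq, h, exp_neg]
  field_simp

section Riccati

variable {m a : ℝ} {f : ℝ → ℝ}

theorem riccati_add_eq_zero_or_ne (hf : ∀ t, HasDerivAt f ((f t ^ 2 - a ^ 2) / m) t) :
    (∀ t, a + f t = 0) ∨ ∀ t, a + f t ≠ 0 := by
  have hfc : Continuous f := continuous_iff_continuousAt.2 fun t => (hf t).continuousAt
  refine eq_zero_or_ne_zero_of_hasDerivAt_mul (c := fun t => (f t - a) / m) (by fun_prop)
    fun t => ?_
  exact ((hf t).const_add a).congr_deriv (by ring)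

theorem riccati_hasDerivAt_div (hf : ∀ t, HasDerivAt f ((f t ^ 2 - a ^ 2) / m) t)
    (hne : ∀ t, a - f t ≠ 0) (t : ℝ) :
    HasDerivAt (fun t => (a + f t) / (a - f t)) (-(2 * a / m) * ((a + f t) / (a - f t))) t := by
  refine (((hf t).const_add a).div ((hf t).const_sub a) (hne t)).congr_deriv ?_
  field_simp [hne t]
  ring

theorem riccati_eq_neg_mul_tanh (ha : a ≠ 0) (hm : m ≠ 0)
    (hf : ∀ t, HasDerivAt f ((f t ^ 2 - a ^ 2) / m) t)
    (hplus : ∀ t, a + f t ≠ 0) (hminus : ∀ t, a - f t ≠ 0) :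
    ∃ C, ∀ t, f t = -a * tanh (a / m * (t + C)) := by
  set w : ℝ → ℝ := fun t => (a + f t) / (a - f t)
  set k : ℝ := -(2 * a / m)
  have hk : k ≠ 0 := by simp [k, ha, hm]
  have hw : ∀ t, w t = w 0 * exp (k * t) :=
    eq_mul_exp_of_hasDerivAt_const_mul (riccati_hasDerivAt_div hf hminus)
  have hw_ne : ∀ t, w t ≠ -1 := fun t h => by
    rw [div_eq_iff (hminus t)] at h
    exact ha (by linarith)
  have hw0 : 0 < w 0 := by
    by_contra! hle
    have hlt : w 0 < 0 := lt_of_le_of_ne hle (div_ne_zero (hplus 0) (hminus 0))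
    apply hw_ne (-log (-w 0) / k)
    rw [hw, mul_div_cancel₀ _ hk, exp_neg, exp_log (neg_pos.2 hlt)]
    field_simp [hlt.ne]
  refine ⟨log (w 0) / k, fun t => ?_⟩
  have hwt : w t = exp (-2 * (a / m * (t + log (w 0) / k))) := by
    rw [hw, show -2 * (a / m * (t + log (w 0) / k)) = k * t + log (w 0) by
      simp only [k]; field_simp; ring, exp_add, exp_log hw0, mul_comm]
  rw [tanh_eq_one_sub_exp_div, ← hwt]
  simp only [w]
  field_simp [hminus t]
  rw [show a - f t - (a + f t) = -2 * f t by ring, show a - f t + (a + f t) = 2 * a by ring]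
  field_simp

theorem riccati_trichotomy (ha : a ≠ 0) (hm : m ≠ 0)
    (hf : ∀ t, HasDerivAt f ((f t ^ 2 - a ^ 2) / m) t) :
    (∀ t, f t = a) ∨ (∀ t, f t = -a) ∨ ∃ C, ∀ t, f t = -a * tanh (a / m * (t + C)) := by
  rcases riccati_add_eq_zero_or_ne hf with hplus | hplus
  · exact Or.inr <| Or.inl fun t => by linarith [hplus t]
  -- the equation only involves `a ^ 2`, so it also controls `-a + f`
  rcases riccati_add_eq_zero_or_ne (a := -a) (by simpa only [neg_sq] using hf) with hminus | hminus
  · exact Or.inl fun t => by linarith [hminus t]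
  exact Or.inr <| Or.inr <| riccati_eq_neg_mul_tanh ha hm hf hplus fun t h =>
    hminus t (by linarith)

end Riccati

theorem riccati_lambda_m_neg_trichotomy_general (m lam : ℝ) (f : ℝ → ℝ)
    (hf : ∀ t : ℝ, HasDerivAt f ((1 / m) * (f t) ^ 2 + lam) t)
    (h : lam * m < 0) :
    ((∀ t : ℝ, f t = Real.sqrt (-(lam * m))) ∨
      (∀ t : ℝ, f t = -Real.sqrt (-(lam * m))) ∨
      (∃ C : ℝ, ∀ t : ℝ,
        f t = -Real.sqrt (-(lam * m)) * Real.tanh ((Real.sqrt (-(lam * m)) / m) * (t + C)))) ∧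
    ¬ ((∀ t : ℝ, f t = Real.sqrt (-(lam * m))) ∧
        (∀ t : ℝ, f t = -Real.sqrt (-(lam * m)))) ∧
    ¬ ((∀ t : ℝ, f t = Real.sqrt (-(lam * m))) ∧
        (∃ C : ℝ, ∀ t : ℝ,
          f t = -Real.sqrt (-(lam * m)) * Real.tanh ((Real.sqrt (-(lam * m)) / m) * (t + C)))) ∧
    ¬ ((∀ t : ℝ, f t = -Real.sqrt (-(lam * m))) ∧
        (∃ C : ℝ, ∀ t : ℝ,
          f t = -Real.sqrt (-(lam * m)) * Real.tanh ((Real.sqrt (-(lam * m)) / m) * (t + C)))) := by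
  have hm : m ≠ 0 := by rintro rfl; simp at h
  set a := √(-(lam * m))
  have ha : 0 < a := sqrt_pos.2 (by linarith)
  have hf' : ∀ t, HasDerivAt f ((f t ^ 2 - a ^ 2) / m) t := fun t =>
    (hf t).congr_deriv (by rw [sq_sqrt (by linarith)]; field_simp; ring)
  have htanh_zero : ∀ C, -a * tanh (a / m * (-C + C)) = 0 := by simp
  refine ⟨riccati_trichotomy ha.ne' hm hf', ?_, ?_, ?_⟩
  · rintro ⟨h₁, h₂⟩
    linarith [h₁ 0, h₂ 0]
  · rintro ⟨h₁, C, h₂⟩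
    linarith [h₁ (-C), h₂ (-C), htanh_zero C]
  · rintro ⟨h₁, C, h₂⟩
    linarith [h₁ (-C), h₂ (-C), htanh_zero C]

/-- Lemma 3.2(3): if `λ·m < 0`, then exactly one of the following holds:
`f ≡ √(−λm)`, `f ≡ −√(−λm)`, or `f(t) = −√(−λm)·tanh((√(−λm)/m)(t+C))` for some `C`. -/
theorem riccati_lambda_m_neg_trichotomy (m lam : ℝ) (hm : m ≠ 0) (f : ℝ → ℝ)
    (hf : ∀ t : ℝ, HasDerivAt f ((1 / m) * (f t) ^ 2 + lam) t)
    (h : lam * m < 0) :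
    ((∀ t : ℝ, f t = Real.sqrt (-(lam * m))) ∨
      (∀ t : ℝ, f t = -Real.sqrt (-(lam * m))) ∨
      (∃ C : ℝ, ∀ t : ℝ,
        f t = -Real.sqrt (-(lam * m)) * Real.tanh ((Real.sqrt (-(lam * m)) / m) * (t + C)))) ∧
    ¬ ((∀ t : ℝ, f t = Real.sqrt (-(lam * m))) ∧
        (∀ t : ℝ, f t = -Real.sqrt (-(lam * m)))) ∧
    ¬ ((∀ t : ℝ, f t = Real.sqrt (-(lam * m))) ∧
        (∃ C : ℝ, ∀ t : ℝ,
          f t = -Real.sqrt (-(lam * m)) * Real.tanh ((Real.sqrt (-(lam * m)) / m) * (t + C)))) ∧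
    ¬ ((∀ t : ℝ, f t = -Real.sqrt (-(lam * m))) ∧
        (∃ C : ℝ, ∀ t : ℝ,
          f t = -Real.sqrt (-(lam * m)) * Real.tanh ((Real.sqrt (-(lam * m)) / m) * (t + C)))) :=
  riccati_lambda_m_neg_trichotomy_general m lam f hf h
end

section
/- If λ·m < 0, then every such global solution is bounded, with f(t)² ≤ −λm for all t ∈ ℝ. -/
/-!
With `c = √(-λm)` the equation reads `f' = (f² - c²) / m`. For `m > 0`, if `f` ever exceeds `c`
then `u = f - c` satisfies `u' ≥ u² / m` from then on and blows up in finite time, which a global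
solution cannot do. The symmetries `f ↦ -f(-t)` and `(f, m, λ) ↦ (-f, -m, -λ)` of the equation
reduce the lower bound and the case `m < 0` to this one.
-/

open Set

theorem le_apply_of_deriv_pos_at_level {u u' : ℝ → ℝ} {t₀ : ℝ}
    (hu : ∀ t ≥ t₀, HasDerivAt u (u' t) t) (hu' : ∀ t ≥ t₀, u t = u t₀ → 0 < u' t) :
    ∀ t ≥ t₀, u t₀ ≤ u t := fun _ ht =>
  image_le_of_deriv_right_lt_deriv_boundary' (f := fun _ => u t₀) (f' := 0)
    continuousOn_const (fun _ _ => hasDerivWithinAt_const _ _ _) le_rfl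
    (fun s hs => (hu s hs.1).continuousAt.continuousWithinAt)
    (fun s hs => (hu s hs.1).hasDerivWithinAt)
    (fun s hs hs' => hu' s hs.1 hs'.symm) ⟨ht, le_rfl⟩

/-- `1 / u + k t` is nonincreasing as long as `u > 0`, yet it stays above `k t`. -/
theorem nonpos_of_mul_sq_le_deriv {k : ℝ} (hk : 0 < k) {u u' : ℝ → ℝ} {t₀ : ℝ}
    (hu : ∀ t ≥ t₀, HasDerivAt u (u' t) t) (hu' : ∀ t ≥ t₀, 0 < u t → k * u t ^ 2 ≤ u' t) :
    u t₀ ≤ 0 := by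
  by_contra! h₀
  have hpos : ∀ t ≥ t₀, 0 < u t := fun t ht =>
    h₀.trans_le <| le_apply_of_deriv_pos_at_level hu
      (fun s hs hs' => by
        have hus : 0 < u s := hs' ▸ h₀
        exact (by positivity : 0 < k * u s ^ 2).trans_le (hu' s hs hus)) t ht
  set g : ℝ → ℝ := fun t => (u t)⁻¹ + k * t
  have hg : ∀ t ≥ t₀, HasDerivAt g (-u' t / u t ^ 2 + k) t := fun t ht =>
    ((hu t ht).inv (hpos t ht).ne').add ((hasDerivAt_id t).const_mul k |>.congr_deriv (mul_one k))
  have hanti : AntitoneOn g (Ici t₀) := by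
    refine antitoneOn_of_hasDerivWithinAt_nonpos (convex_Ici t₀)
      (fun t ht => (hg t ht).continuousAt.continuousWithinAt)
      (fun t ht => (hg t (interior_subset ht)).hasDerivWithinAt) fun t ht => ?_
    have ht : t₀ ≤ t := interior_subset ht
    have hut := hpos t ht
    rw [neg_div, neg_add_nonpos_iff, le_div_iff₀ (by positivity)]
    exact hu' t ht hut
  set T := t₀ + (k * u t₀)⁻¹
  have hT : t₀ ≤ T := le_add_of_nonneg_right (by positivity)
  have hgT : g T ≤ g t₀ := hanti self_mem_Ici hT hT
  have hkT : k * T = (u t₀)⁻¹ + k * t₀ := by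
    simp only [T]; field_simp; ring
  have huT : 0 < (u T)⁻¹ := inv_pos.2 (hpos T hT)
  simp only [g] at hgT
  linarith

def IsRiccatiSolution (m lam : ℝ) (f : ℝ → ℝ) : Prop :=
  ∀ t, HasDerivAt f ((1 / m) * f t ^ 2 + lam) t

namespace IsRiccatiSolution

variable {m lam : ℝ} {f : ℝ → ℝ}

theorem neg (hf : IsRiccatiSolution m lam f) : IsRiccatiSolution (-m) (-lam) (fun t => -f t) :=
  fun t => (hf t).neg.congr_deriv (by rw [one_div_neg_eq_neg_one_div]; ring)

theorem neg_comp_neg (hf : IsRiccatiSolution m lam f) :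
    IsRiccatiSolution m lam (fun t => -f (-t)) := fun t =>
  ((hf (-t)).comp t (hasDerivAt_neg t)).neg.congr_deriv (by ring)

theorem le_of_pos (hf : IsRiccatiSolution m lam f) (hm : 0 < m) {c : ℝ} (hc : 0 ≤ c)
    (hc2 : c ^ 2 = -(lam * m)) (t : ℝ) : f t ≤ c := by
  have hlam : lam = -(c ^ 2 / m) := by field_simp; linarith
  refine sub_nonpos.1 <| nonpos_of_mul_sq_le_deriv (t₀ := t) (one_div_pos.2 hm)
    (fun s _ => (hf s).sub_const c) fun s _ hs => ?_
  have hgap : 0 ≤ 2 * c * (f s - c) / m := by positivity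
  have hdiff : 1 / m * f s ^ 2 + lam - 1 / m * (f s - c) ^ 2 = 2 * c * (f s - c) / m := by
    rw [hlam]; field_simp; ring
  linarith

theorem sq_le_of_pos (hf : IsRiccatiSolution m lam f) (hm : 0 < m) (hlam : lam ≤ 0) (t : ℝ) :
    f t ^ 2 ≤ -(lam * m) := by
  have hnonneg : 0 ≤ -(lam * m) := neg_nonneg.2 (mul_nonpos_of_nonpos_of_nonneg hlam hm.le)
  set c := √(-(lam * m))
  have hc2 : c ^ 2 = -(lam * m) := Real.sq_sqrt hnonneg
  have hupper : f t ≤ c := hf.le_of_pos hm (Real.sqrt_nonneg _) hc2 t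
  have hlower : -c ≤ f t := by
    simpa using neg_le_neg (hf.neg_comp_neg.le_of_pos hm (Real.sqrt_nonneg _) hc2 (-t))
  exact hc2 ▸ sq_le_sq' hlower hupper

end IsRiccatiSolution

theorem riccati_lambda_m_neg_bounded_general (m lam : ℝ) (f : ℝ → ℝ)
    (hf : ∀ t : ℝ, HasDerivAt f ((1 / m) * (f t) ^ 2 + lam) t)
    (h : lam * m < 0) :
    ∀ t : ℝ, (f t) ^ 2 ≤ -(lam * m) := by
  intro t
  rcases lt_trichotomy m 0 with hm | rfl | hm
  · have hlam : 0 < lam := pos_of_mul_neg_left h hm.le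
    simpa [neg_mul_neg] using
      (IsRiccatiSolution.neg hf).sq_le_of_pos (neg_pos.2 hm) (neg_nonpos.2 hlam.le) t
  · simp at h
  · exact IsRiccatiSolution.sq_le_of_pos hf hm (neg_of_mul_neg_left h hm.le).le t

/-- If `λ·m < 0`, every global solution of the Riccati equation satisfies
`f(t)² ≤ −λm` for all `t`. -/
theorem riccati_lambda_m_neg_bounded (m lam : ℝ) (hm : m ≠ 0) (f : ℝ → ℝ)
    (hf : ∀ t : ℝ, HasDerivAt f ((1 / m) * (f t) ^ 2 + lam) t)
    (h : lam * m < 0) :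
    ∀ t : ℝ, (f t) ^ 2 ≤ -(lam * m) :=
  riccati_lambda_m_neg_bounded_general m lam f hf h
end

section
/- If f is not a constant function, then necessarily λ·m < 0 and f is strictly monotone on ℝ: strictly decreasing if m > 0, and strictly increasing if m < 0. -/
/-!
Put `k = λ m`, so that `m f' = f² + k`. The function `w = f² + k` solves the linear equation
`w' = (2 f / m) w`, hence `w(t) = w(0) exp (∫₀ᵗ 2 f / m)` has a constant sign. If `w(0) = 0` then
`f' ≡ 0` and `f` is constant. If `w > 0` everywhere, separating variables gives a function
`G = Φ ∘ f` with `G' = 1`, so `G` is onto `ℝ`; but `Φ` is `m/√k · arctan (x/√k)` (bounded) when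
`k > 0`, `-m/x` (never `0`) when `k = 0`, and `m/(2a) · log ((x - a)/(x + a))` with `a = √(-k)`
(never `0` on `|x| > a`) when `k < 0`. Hence `w < 0` everywhere: `k < -f² ≤ 0`, and `f' = w/m`
has the sign of `-m`.
-/

open Real

theorem surjective_of_hasDerivAt_one {G : ℝ → ℝ} (hG : ∀ t, HasDerivAt G 1 t) :
    Function.Surjective G := by
  have hderiv : ∀ t, HasDerivAt (fun x => G x - x) 0 t := fun t =>
    ((hG t).sub (hasDerivAt_id' (x := t))).congr_deriv (sub_self 1)
  have hconst (t : ℝ) : G t - t = G 0 - 0 :=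
    is_const_of_deriv_eq_zero (fun s => (hderiv s).differentiableAt) (fun s => (hderiv s).deriv) t 0
  exact fun y => ⟨y - G 0, by linarith [hconst (y - G 0)]⟩

theorem eq_mul_exp_integral_of_hasDerivAt {c v : ℝ → ℝ} (hc : Continuous c)
    (hv : ∀ t, HasDerivAt v (c t * v t) t) (t : ℝ) :
    v t = v 0 * exp (∫ s in (0 : ℝ)..t, c s) := by
  set C : ℝ → ℝ := fun t => ∫ s in (0 : ℝ)..t, c s
  have hC (s : ℝ) : HasDerivAt C (c s) s := (hc.integral_hasStrictDerivAt 0 s).hasDerivAt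
  have hderiv : ∀ s, HasDerivAt (fun x => v x * exp (-C x)) 0 s := fun s =>
    ((hv s).mul (hC s).neg.exp).congr_deriv (by ring)
  have hconst := is_const_of_deriv_eq_zero (fun s => (hderiv s).differentiableAt)
    (fun s => (hderiv s).deriv) t 0
  simp only [C, intervalIntegral.integral_same, neg_zero, exp_zero, mul_one] at hconst
  rw [← hconst, mul_assoc, ← exp_add, neg_add_cancel, exp_zero, mul_one]

section Riccati

variable {m : ℝ} {f : ℝ → ℝ}

theorem hasDerivAt_arctan_riccati {b t : ℝ} (hm : m ≠ 0) (hb : b ≠ 0)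
    (hf : HasDerivAt f ((f t ^ 2 + b ^ 2) / m) t) :
    HasDerivAt (fun x => m / b * arctan (f x / b)) 1 t := by
  refine ((hf.div_const b).arctan.const_mul (m / b)).congr_deriv ?_
  field_simp
  ring

theorem hasDerivAt_neg_div_riccati {t : ℝ} (hm : m ≠ 0) (hft : f t ≠ 0)
    (hf : HasDerivAt f (f t ^ 2 / m) t) :
    HasDerivAt (fun x => -(m / f x)) 1 t := by
  refine ((hasDerivAt_const t m).div hf hft).neg.congr_deriv ?_
  field_simp
  ring

theorem hasDerivAt_log_riccati {a t : ℝ} (hm : m ≠ 0) (ha : a ≠ 0) (hsub : f t - a ≠ 0)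
    (hadd : f t + a ≠ 0) (hf : HasDerivAt f ((f t ^ 2 - a ^ 2) / m) t) :
    HasDerivAt (fun x => m / (2 * a) * log ((f x - a) / (f x + a))) 1 t := by
  refine ((((hf.sub_const a).fun_div (hf.add_const a) hadd).log
    (div_ne_zero hsub hadd)).const_mul (m / (2 * a))).congr_deriv ?_
  field_simp
  ring

theorem not_forall_hasDerivAt_riccati_of_pos {k : ℝ} (hm : m ≠ 0) (hk : 0 < k) :
    ¬ ∀ t, HasDerivAt f ((f t ^ 2 + k) / m) t := by
  intro hf
  obtain ⟨b, hb, rfl⟩ : ∃ b, 0 < b ∧ k = b ^ 2 := ⟨√k, sqrt_pos.2 hk, (sq_sqrt hk.le).symm⟩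
  obtain ⟨t, ht⟩ := surjective_of_hasDerivAt_one
    (fun t => hasDerivAt_arctan_riccati hm hb.ne' (hf t)) (|m| / b * (π / 2) + 1)
  have harctan : |arctan (f t / b)| < π / 2 :=
    abs_lt.2 ⟨neg_pi_div_two_lt_arctan _, arctan_lt_pi_div_two _⟩
  have hbound : |m / b * arctan (f t / b)| ≤ |m| / b * (π / 2) := by
    rw [abs_mul, abs_div, abs_of_pos hb]
    gcongr
  rw [show m / b * arctan (f t / b) = _ from ht, abs_of_pos (by positivity)] at hbound
  linarith

theorem exists_eq_zero_of_riccati (hm : m ≠ 0)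
    (hf : ∀ t, HasDerivAt f (f t ^ 2 / m) t) : ∃ t, f t = 0 := by
  by_contra! hne
  obtain ⟨t, ht⟩ :=
    surjective_of_hasDerivAt_one (fun t => hasDerivAt_neg_div_riccati hm (hne t) (hf t)) 0
  exact div_ne_zero hm (hne t) (neg_eq_zero.1 ht)

theorem exists_sq_le_of_riccati {a : ℝ} (hm : m ≠ 0) (ha : a ≠ 0)
    (hf : ∀ t, HasDerivAt f ((f t ^ 2 - a ^ 2) / m) t) : ∃ t, f t ^ 2 ≤ a ^ 2 := by
  by_contra! hgt
  have hprod (t : ℝ) : (f t - a) * (f t + a) ≠ 0 := by nlinarith [hgt t]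
  have hsub (t : ℝ) : f t - a ≠ 0 := left_ne_zero_of_mul (hprod t)
  have hadd (t : ℝ) : f t + a ≠ 0 := right_ne_zero_of_mul (hprod t)
  obtain ⟨t, ht⟩ := surjective_of_hasDerivAt_one
    (fun t => hasDerivAt_log_riccati hm ha (hsub t) (hadd t) (hf t)) 0
  rcases mul_eq_zero.1 ht with h | h
  · exact div_ne_zero hm (mul_ne_zero two_ne_zero ha) h
  rcases log_eq_zero.1 h with h | h | h
  · exact div_ne_zero (hsub t) (hadd t) h
  · rw [div_eq_one_iff_eq (hadd t)] at h
    exact ha (by linarith)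
  · rw [div_eq_iff (hadd t)] at h
    nlinarith [hgt t]

theorem exists_sq_add_nonpos_of_riccati {k : ℝ} (hm : m ≠ 0)
    (hf : ∀ t, HasDerivAt f ((f t ^ 2 + k) / m) t) : ∃ t, f t ^ 2 + k ≤ 0 := by
  rcases lt_trichotomy k 0 with hk | rfl | hk
  · have ha : √(-k) ^ 2 = -k := sq_sqrt (by linarith)
    obtain ⟨t, ht⟩ := exists_sq_le_of_riccati hm (sqrt_pos.2 (neg_pos.2 hk)).ne'
      (by simpa only [ha, sub_neg_eq_add] using hf)
    exact ⟨t, by linarith⟩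
  · obtain ⟨t, ht⟩ := exists_eq_zero_of_riccati hm (by simpa using hf)
    exact ⟨t, by simp [ht]⟩
  · exact absurd hf (not_forall_hasDerivAt_riccati_of_pos hm hk)

theorem sq_add_eq_mul_exp_of_riccati {k : ℝ}
    (hf : ∀ t, HasDerivAt f ((f t ^ 2 + k) / m) t) (t : ℝ) :
    f t ^ 2 + k = (f 0 ^ 2 + k) * exp (∫ s in (0 : ℝ)..t, 2 * f s / m) := by
  have hfc : Continuous f := continuous_iff_continuousAt.2 fun t => (hf t).continuousAt
  refine eq_mul_exp_integral_of_hasDerivAt (c := fun s => 2 * f s / m)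
    (v := fun s => f s ^ 2 + k) (by fun_prop) (fun t => ?_) t
  refine (((hf t).pow 2).add_const k).congr_deriv ?_
  field_simp
  ring

theorem sq_add_neg_of_riccati {k : ℝ} (hm : m ≠ 0)
    (hf : ∀ t, HasDerivAt f ((f t ^ 2 + k) / m) t) (hnc : ¬ ∃ c : ℝ, ∀ t : ℝ, f t = c)
    (t : ℝ) : f t ^ 2 + k < 0 := by
  have hexp := sq_add_eq_mul_exp_of_riccati hf
  rcases lt_trichotomy (f 0 ^ 2 + k) 0 with hneg | hzero | hpos
  · rw [hexp]
    exact mul_neg_of_neg_of_pos hneg (exp_pos _)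
  · refine absurd ⟨f 0, fun t => ?_⟩ hnc
    have hderiv (s : ℝ) : HasDerivAt f 0 s := by simpa [hexp s, hzero] using hf s
    exact is_const_of_deriv_eq_zero (fun s => (hderiv s).differentiableAt)
      (fun s => (hderiv s).deriv) t 0
  · obtain ⟨s, hs⟩ := exists_sq_add_nonpos_of_riccati hm hf
    rw [hexp] at hs
    exact absurd hs (mul_pos hpos (exp_pos _)).not_ge

end Riccati

/-- If `f` is not constant, then `λ·m < 0` and `f` is strictly monotone:
strictly decreasing when `m > 0` and strictly increasing when `m < 0`. -/
theorem riccati_nonconstant_monotone (m lam : ℝ) (hm : m ≠ 0) (f : ℝ → ℝ)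
    (hf : ∀ t : ℝ, HasDerivAt f ((1 / m) * (f t) ^ 2 + lam) t)
    (hnc : ¬ ∃ c : ℝ, ∀ t : ℝ, f t = c) :
    lam * m < 0 ∧ (m > 0 → StrictAnti f) ∧ (m < 0 → StrictMono f) := by
  have hf' (t : ℝ) : HasDerivAt f ((f t ^ 2 + lam * m) / m) t := by
    refine (hf t).congr_deriv ?_
    field_simp
  have hneg := sq_add_neg_of_riccati hm hf' hnc
  refine ⟨by nlinarith [hneg 0, sq_nonneg (f 0)], fun hmpos => ?_, fun hmneg => ?_⟩
  · exact strictAnti_of_hasDerivAt_neg hf' fun t => div_neg_of_neg_of_pos (hneg t) hmpos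
  · exact strictMono_of_hasDerivAt_pos hf' fun t => div_pos_of_neg_of_neg (hneg t) hmneg
end

section
/- If there exists a sequence (tₙ) of real numbers with tₙ → +∞ such that f(tₙ) → f(0), then f is constant. (This recurrence-implies-constancy principle is the analytic core of the compactness argument in the proofs of Lemma 2.3 and Lemma 6.3 of the paper, where the values of f along an integral curve in a compact quotient accumulate.) -/
/-!
Along a solution of `f' = f² / m + λ` the derivative `g = f'` solves the linear equation
`g' = (2 f / m) g`, so `g = g 0 · exp (∫₀ˢ 2 f / m)` never changes sign. Hence `f` is either
constant or strictly monotone, and a strictly monotone function cannot return near `f 0` along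
a sequence tending to `+∞`.
-/

open Filter Real Topology

theorem eq_mul_exp_integral_of_hasDerivAt_s8 {a g : ℝ → ℝ} (ha : Continuous a)
    (hg : ∀ s, HasDerivAt g (a s * g s) s) (s : ℝ) :
    g s = g 0 * exp (∫ x in (0 : ℝ)..s, a x) := by
  set A : ℝ → ℝ := fun u => ∫ x in (0 : ℝ)..u, a x
  have hA : ∀ u, HasDerivAt A (a u) u := fun u => (ha.integral_hasStrictDerivAt 0 u).hasDerivAt
  have hconst : ∀ u, HasDerivAt (fun u => g u * exp (-A u)) 0 u := fun u =>
    ((hg u).mul (hA u).neg.exp).congr_deriv (by ring)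
  have hgA : g s * exp (-A s) = g 0 * exp (-A 0) :=
    is_const_of_deriv_eq_zero (fun u => (hconst u).differentiableAt) (fun u => (hconst u).deriv) s 0
  simp only [A, intervalIntegral.integral_same, neg_zero, exp_zero, mul_one] at hgA
  rw [← hgA, mul_assoc, ← exp_add, neg_add_cancel, exp_zero, mul_one]

theorem StrictMono.not_tendsto_apply_of_tendsto_atTop {ι α β : Type*}
    [PartialOrder α] [NoMaxOrder α] [LinearOrder β] [TopologicalSpace β] [OrderClosedTopology β]
    {f : α → β} (hf : StrictMono f)
    {l : Filter ι} [l.NeBot] {t : ι → α} (ht : Tendsto t l atTop) (a : α) :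
    ¬ Tendsto (fun n => f (t n)) l (𝓝 (f a)) := fun hlim => by
  obtain ⟨b, hab⟩ := exists_gt a
  have hfb : ∀ᶠ n in l, f b ≤ f (t n) :=
    (ht.eventually_ge_atTop b).mono fun n hn => hf.monotone hn
  exact (hf hab).not_ge (ge_of_tendsto hlim hfb)

theorem StrictAnti.not_tendsto_apply_of_tendsto_atTop {ι α β : Type*}
    [PartialOrder α] [NoMaxOrder α] [LinearOrder β] [TopologicalSpace β] [OrderClosedTopology β]
    {f : α → β} (hf : StrictAnti f)
    {l : Filter ι} [l.NeBot] {t : ι → α} (ht : Tendsto t l atTop) (a : α) :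
    ¬ Tendsto (fun n => f (t n)) l (𝓝 (f a)) :=
  StrictMono.not_tendsto_apply_of_tendsto_atTop (β := βᵒᵈ) hf.dual_right ht a

theorem hasDerivAt_riccati_rhs {m lam : ℝ} {f : ℝ → ℝ}
    (hf : ∀ t, HasDerivAt f ((1 / m) * f t ^ 2 + lam) t) (s : ℝ) :
    HasDerivAt (fun t => (1 / m) * f t ^ 2 + lam) (2 * f s / m * ((1 / m) * f s ^ 2 + lam)) s :=
  ((((hf s).pow 2).const_mul (1 / m)).add_const lam).congr_deriv (by ring)

theorem riccati_recurrent_constant_general (m lam : ℝ) (f : ℝ → ℝ)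
    (hf : ∀ t : ℝ, HasDerivAt f ((1 / m) * (f t) ^ 2 + lam) t)
    (hrec : ∃ t : ℕ → ℝ, Filter.Tendsto t Filter.atTop Filter.atTop ∧
      Filter.Tendsto (fun n => f (t n)) Filter.atTop (nhds (f 0))) :
    ∃ c : ℝ, ∀ s : ℝ, f s = c := by
  obtain ⟨t, ht, hft⟩ := hrec
  set g : ℝ → ℝ := fun s => (1 / m) * f s ^ 2 + lam
  have hf_cont : Continuous f := continuous_iff_continuousAt.2 fun s => (hf s).continuousAt
  have hderiv (s : ℝ) : deriv f s = g 0 * exp (∫ x in (0 : ℝ)..s, 2 * f x / m) :=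
    (hf s).deriv.trans <| eq_mul_exp_integral_of_hasDerivAt_s8
      ((continuous_const.mul hf_cont).div_const m) (hasDerivAt_riccati_rhs hf) s
  rcases lt_trichotomy (g 0) 0 with hneg | hzero | hpos
  · have hanti : StrictAnti f := strictAnti_of_deriv_neg fun s => by
      rw [hderiv]
      exact mul_neg_of_neg_of_pos hneg (exp_pos _)
    exact absurd hft (hanti.not_tendsto_apply_of_tendsto_atTop ht 0)
  · exact ⟨f 0, fun s => is_const_of_deriv_eq_zero (fun x => (hf x).differentiableAt)
      (fun x => by rw [hderiv, hzero, zero_mul]) s 0⟩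
  · have hmono : StrictMono f := strictMono_of_deriv_pos fun s => by
      rw [hderiv]
      exact mul_pos hpos (exp_pos _)
    exact absurd hft (hmono.not_tendsto_apply_of_tendsto_atTop ht 0)

/-- Recurrence implies constancy: if there is a sequence `tₙ → +∞` with
`f(tₙ) → f(0)`, then `f` is constant. -/
theorem riccati_recurrent_constant (m lam : ℝ) (hm : m ≠ 0) (f : ℝ → ℝ)
    (hf : ∀ t : ℝ, HasDerivAt f ((1 / m) * (f t) ^ 2 + lam) t)
    (hrec : ∃ t : ℕ → ℝ, Filter.Tendsto t Filter.atTop Filter.atTop ∧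
      Filter.Tendsto (fun n => f (t n)) Filter.atTop (nhds (f 0))) :
    ∃ c : ℝ, ∀ s : ℝ, f s = c :=
  riccati_recurrent_constant_general m lam f hf hrec
end

section
/- Let x ∈ 𝔤 and let q := (1/2)(ad x + (ad x)*) − (‖x‖²/m)·P_x be the associated endomorphism of 𝔤. If tr(q ∘ ad x) = 0, then ad x + (ad x)* = 0, i.e., ad x is skew-adjoint with respect to the inner product. (This is the algebraic content of Lemma 2.5 of the paper: for a left-invariant metric on a Lie group, a left-invariant vector field X is Killing precisely when ad_X is skew-adjoint, and the tensor (1/2)L_X g − (1/m)X*⊗X* = q corresponds to the endomorphism (1/2)(ad x + (ad x)*) − (‖x‖²/m)P_x.) -/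
/-!
With `A = ad x` and `S = A + A*`, antisymmetry gives `A x = 0`, so `A ∘ P_x = 0` and hence
`tr (P_x ∘ A) = tr (A ∘ P_x) = 0`. Thus `tr (q ∘ A) = ½ tr (S ∘ A)`. Since `S` is
self-adjoint, `tr (S* ∘ S) = tr (S ∘ S) = 2 tr (S ∘ A)`, so the hypothesis forces
`tr (S* ∘ S) = 0`, i.e. `S = 0`.
-/

namespace LinearMap

section

variable {𝕜 E : Type*} [RCLike 𝕜] [NormedAddCommGroup E] [InnerProductSpace 𝕜 E]
  [FiniteDimensional 𝕜 E]

theorem trace_adjoint (f : E →ₗ[𝕜] E) :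
    (adjoint f).trace 𝕜 E = starRingEnd 𝕜 (f.trace 𝕜 E) := by
  let b := (stdOrthonormalBasis 𝕜 E).toBasis
  rw [trace_eq_matrix_trace 𝕜 b, trace_eq_matrix_trace 𝕜 b, toMatrix_adjoint,
    Matrix.trace_conjTranspose]
  rfl

theorem adjoint_add_adjoint_self (A : E →ₗ[𝕜] E) : adjoint (A + adjoint A) = A + adjoint A := by
  rw [map_add, adjoint_adjoint, add_comm]

open scoped ComplexOrder in
theorem trace_adjoint_comp_self_eq_zero_iff {f : E →ₗ[𝕜] E} :
    (adjoint f ∘ₗ f).trace 𝕜 E = 0 ↔ f = 0 := by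
  let b := stdOrthonormalBasis 𝕜 E
  rw [trace_eq_matrix_trace 𝕜 b.toBasis, toMatrix_comp b.toBasis b.toBasis b.toBasis,
    toMatrix_adjoint, Matrix.trace_conjTranspose_mul_self_eq_zero_iff, EmbeddingLike.map_eq_zero_iff]

end

section Real

variable {E : Type*} [NormedAddCommGroup E] [InnerProductSpace ℝ E] [FiniteDimensional ℝ E]

/-- `S = A + A†` is self-adjoint, so `tr (S A†) = tr ((A S)†) = tr (A S) = tr (S A)`. -/
theorem trace_add_adjoint_comp_self (A : E →ₗ[ℝ] E) :
    ((A + adjoint A) ∘ₗ (A + adjoint A)).trace ℝ E = 2 * ((A + adjoint A) ∘ₗ A).trace ℝ E := by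
  have hS := adjoint_add_adjoint_self A
  set S := A + adjoint A
  have : (S ∘ₗ adjoint A).trace ℝ E = (S ∘ₗ A).trace ℝ E := by
    rw [← hS, ← adjoint_comp, trace_adjoint, conj_trivial, hS, trace_comp_comm']
  rw [comp_add, map_add, this, two_mul]

theorem add_adjoint_eq_zero_of_trace_comp_eq_zero {A : E →ₗ[ℝ] E}
    (h : ((A + adjoint A) ∘ₗ A).trace ℝ E = 0) : A + adjoint A = 0 := by
  rw [← trace_adjoint_comp_self_eq_zero_iff (𝕜 := ℝ), adjoint_add_adjoint_self,
    trace_add_adjoint_comp_self, h, mul_zero]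

end Real

end LinearMap

theorem ad_skew_adjoint_of_trace_zero_general (𝔤 : Type*) [NormedAddCommGroup 𝔤]
    [InnerProductSpace ℝ 𝔤] [FiniteDimensional ℝ 𝔤]
    (bracket : 𝔤 →ₗ[ℝ] 𝔤 →ₗ[ℝ] 𝔤)
    (hanti : ∀ y z : 𝔤, bracket y z = -bracket z y)
    (m : ℝ) (x : 𝔤) (q : 𝔤 →ₗ[ℝ] 𝔤)
    (hq : q = (1 / 2 : ℝ) • (bracket x + LinearMap.adjoint (bracket x))
        - (‖x‖ ^ 2 / m) •
          ((ℝ ∙ x).subtype ∘ₗ (Submodule.orthogonalProjection (ℝ ∙ x) : 𝔤 →L[ℝ] (ℝ ∙ x)).toLinearMap))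
    (htr : LinearMap.trace ℝ 𝔤 (q ∘ₗ bracket x) = 0) :
    bracket x + LinearMap.adjoint (bracket x) = 0 := by
  set A := bracket x
  set P :=
    (ℝ ∙ x).subtype ∘ₗ (Submodule.orthogonalProjectionOnto (ℝ ∙ x) : 𝔤 →L[ℝ] (ℝ ∙ x)).toLinearMap
  have : IsAddTorsionFree 𝔤 := .of_isTorsionFree ℝ 𝔤
  have hAx : A x = 0 := self_eq_neg.mp (hanti x x)
  have hAP : A ∘ₗ P = 0 := by
    rw [← LinearMap.comp_assoc, LinearMap.le_ker_iff_comp_subtype_eq_zero.mp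
      ((Submodule.span_singleton_le_iff_mem x _).mpr hAx), LinearMap.zero_comp]
  have hPA : (P ∘ₗ A).trace ℝ 𝔤 = 0 := by rw [LinearMap.trace_comp_comm', hAP, map_zero]
  apply LinearMap.add_adjoint_eq_zero_of_trace_comp_eq_zero
  rw [hq, LinearMap.sub_comp, map_sub, LinearMap.smul_comp, LinearMap.smul_comp, map_smul,
    map_smul, hPA, smul_zero, sub_zero, smul_eq_zero] at htr
  exact htr.resolve_left (by norm_num)

/-- Lemma 2.5 (algebraic form): let `𝔤` be a finite-dimensional real Lie algebra with an
inner product (the Lie algebra structure is given by a bilinear bracket that is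
antisymmetric and satisfies the Jacobi identity), let `x ∈ 𝔤`, write `ad x = bracket x`,
and let `q = (1/2)(ad x + (ad x)*) − (‖x‖²/m)·P_x`, where `P_x` is the orthogonal
projection onto the span of `x`.  If `tr(q ∘ ad x) = 0`, then `ad x + (ad x)* = 0`,
i.e. `ad x` is skew-adjoint with respect to the inner product. -/
theorem ad_skew_adjoint_of_trace_zero (𝔤 : Type*) [NormedAddCommGroup 𝔤]
    [InnerProductSpace ℝ 𝔤] [FiniteDimensional ℝ 𝔤]
    (bracket : 𝔤 →ₗ[ℝ] 𝔤 →ₗ[ℝ] 𝔤)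
    (hanti : ∀ y z : 𝔤, bracket y z = -bracket z y)
    (hjacobi : ∀ y z w : 𝔤,
      bracket y (bracket z w) = bracket (bracket y z) w + bracket z (bracket y w))
    (m : ℝ) (hm : m ≠ 0) (x : 𝔤) (q : 𝔤 →ₗ[ℝ] 𝔤)
    (hq : q = (1 / 2 : ℝ) • (bracket x + LinearMap.adjoint (bracket x))
        - (‖x‖ ^ 2 / m) •
          ((ℝ ∙ x).subtype ∘ₗ (Submodule.orthogonalProjection (ℝ ∙ x) : 𝔤 →L[ℝ] (ℝ ∙ x)).toLinearMap))
    (htr : LinearMap.trace ℝ 𝔤 (q ∘ₗ bracket x) = 0) :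
    bracket x + LinearMap.adjoint (bracket x) = 0 :=
  ad_skew_adjoint_of_trace_zero_general 𝔤 bracket hanti m x q hq htr
end
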